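/- arXiv:1912.10411 — 4 statements merged into one kernel-verified Lean document; each statement's English description precedes it below -/
import Mathlib

section
/- For \Psi : \mathbb{R}^+ \to \mathbb{R}^+, the following are equivalent: (i) \Psi(0) = 0 and 0 < \Psi(a) \le 2\Psi(b) whenever 0 < a < b; (ii) for every ultrametric space (X, d), the composition \Psi \circ d is a metric on X. -/
/-!
In an ultrametric triangle the two longest sides are equal, so each side `c` either equals one
of the other sides `a`, `b` or is shorter than both; in the latter case adding
`Ψ c ≤ 2 Ψ a` and `Ψ c ≤ 2 Ψ b` gives the triangle inequality for `Ψ ∘ d`. Conversely, the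
three-point isosceles ultrametric space with sides `a ≤ b = b` forces `Ψ a ≤ 2 Ψ b` by the
triangle inequality and `0 < Ψ a` because `Ψ ∘ d` separates points.
-/

def IsMetric {X : Type*} (d : X → X → ℝ) : Prop :=
  (∀ x y, d x y = 0 ↔ x = y) ∧ (∀ x y, d x y = d y x) ∧
  (∀ x y z, d x y ≤ d x z + d z y)

def IsUltrametric {X : Type*} (d : X → X → ℝ) : Prop :=
  IsMetric d ∧ ∀ x y z, d x y ≤ max (d x z) (d z y)

def Amenable (f : ℝ → ℝ) : Prop := f 0 = 0 ∧ ∀ x > 0, f x > 0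

def MetricPreserving (f : ℝ → ℝ) : Prop :=
  ∀ (X : Type) (d : X → X → ℝ), IsMetric d → IsMetric (fun x y => f (d x y))

def UltrametricPreserving (f : ℝ → ℝ) : Prop :=
  ∀ (X : Type) (d : X → X → ℝ), IsUltrametric d → IsUltrametric (fun x y => f (d x y))

def TriangleTriplet (a b c : ℝ) : Prop := a ≤ b + c ∧ b ≤ a + c ∧ c ≤ a + b

def StrongTriangleTriplet (a b c : ℝ) : Prop :=
  a ≤ max b c ∧ b ≤ max a c ∧ c ≤ max a b

lemma IsMetric.nonneg {X : Type*} {d : X → X → ℝ} (hd : IsMetric d) (x y : X) : 0 ≤ d x y := by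
  have h := hd.2.2 x x y
  rw [(hd.1 x x).2 rfl, hd.2.1 y x] at h
  linarith

lemma IsUltrametric.strongTriangleTriplet {X : Type*} {d : X → X → ℝ} (hd : IsUltrametric d)
    (x y z : X) : StrongTriangleTriplet (d x y) (d x z) (d z y) := by
  obtain ⟨⟨-, hsymm, -⟩, hmax⟩ := hd
  refine ⟨hmax x y z, ?_, ?_⟩
  · simpa only [hsymm y z, max_comm] using hmax x z y
  · simpa only [hsymm z x, max_comm] using hmax z y x

lemma StrongTriangleTriplet.eq_or_eq_or_lt {a b c : ℝ} (h : StrongTriangleTriplet c a b) :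
    c = a ∨ c = b ∨ (c < a ∧ c < b) := by
  obtain ⟨hc, ha, hb⟩ := h
  simp only [le_max_iff] at hc ha hb
  grind

section Doubling

variable {Ψ : ℝ → ℝ}

lemma apply_pos_of_le_two_mul (hΨ : ∀ a b : ℝ, 0 < a → a < b → 0 < Ψ a ∧ Ψ a ≤ 2 * Ψ b)
    {x : ℝ} (hx : 0 < x) : 0 < Ψ x :=
  (hΨ x (x + 1) hx (lt_add_one x)).1

lemma apply_nonneg_of_le_two_mul (hΨ0 : Ψ 0 = 0)
    (hΨ : ∀ a b : ℝ, 0 < a → a < b → 0 < Ψ a ∧ Ψ a ≤ 2 * Ψ b) {x : ℝ} (hx : 0 ≤ x) :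
    0 ≤ Ψ x := by
  rcases hx.eq_or_lt with rfl | hx
  · exact hΨ0.ge
  · exact (apply_pos_of_le_two_mul hΨ hx).le

lemma StrongTriangleTriplet.apply_le_add (hΨ0 : Ψ 0 = 0)
    (hΨ : ∀ a b : ℝ, 0 < a → a < b → 0 < Ψ a ∧ Ψ a ≤ 2 * Ψ b) {a b c : ℝ}
    (ha : 0 ≤ a) (hb : 0 ≤ b) (hc : 0 ≤ c) (h : StrongTriangleTriplet c a b) :
    Ψ c ≤ Ψ a + Ψ b := by
  have hΨa := apply_nonneg_of_le_two_mul hΨ0 hΨ ha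
  have hΨb := apply_nonneg_of_le_two_mul hΨ0 hΨ hb
  rcases h.eq_or_eq_or_lt with rfl | rfl | ⟨hca, hcb⟩
  · linarith
  · linarith
  rcases hc.eq_or_lt with rfl | hc
  · linarith
  · linarith [(hΨ c a hc hca).2, (hΨ c b hc hcb).2]

lemma IsUltrametric.isMetric_comp {X : Type*} {d : X → X → ℝ} (hd : IsUltrametric d)
    (hΨ0 : Ψ 0 = 0) (hΨ : ∀ a b : ℝ, 0 < a → a < b → 0 < Ψ a ∧ Ψ a ≤ 2 * Ψ b) :
    IsMetric (fun x y => Ψ (d x y)) := by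
  have hnonneg := hd.1.nonneg
  refine ⟨fun x y => ?_, fun x y => congrArg Ψ (hd.1.2.1 x y), fun x y z => ?_⟩
  · change Ψ (d x y) = 0 ↔ x = y
    rw [← hd.1.1 x y]
    refine ⟨fun hzero => ?_, fun hxy => by rw [hxy, hΨ0]⟩
    by_contra hne
    exact (apply_pos_of_le_two_mul hΨ ((hnonneg x y).lt_of_ne' hne)).ne' hzero
  · exact (hd.strongTriangleTriplet x y z).apply_le_add hΨ0 hΨ
      (hnonneg x z) (hnonneg z y) (hnonneg x y)

end Doubling

def isoscelesDist (a b : ℝ) (i j : Fin 3) : ℝ :=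
  if i = j then 0 else if i ≠ 2 ∧ j ≠ 2 then a else b

lemma isUltrametric_isoscelesDist {a b : ℝ} (ha : 0 < a) (hab : a ≤ b) :
    IsUltrametric (isoscelesDist a b) := by
  refine ⟨⟨?_, ?_, ?_⟩, ?_⟩
  · intro x y; fin_cases x <;> fin_cases y <;> simp [isoscelesDist] <;> linarith
  · intro x y; fin_cases x <;> fin_cases y <;> simp [isoscelesDist]
  · intro x y z; fin_cases x <;> fin_cases y <;> fin_cases z <;> simp [isoscelesDist] <;> linarith
  · intro x y z; fin_cases x <;> fin_cases y <;> fin_cases z <;>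
      simp [isoscelesDist] <;> linarith

lemma IsMetric.apply_pos_and_le_two_mul_of_isoscelesDist {Ψ : ℝ → ℝ} {a b : ℝ}
    (h : IsMetric (fun x y => Ψ (isoscelesDist a b x y))) : 0 < Ψ a ∧ Ψ a ≤ 2 * Ψ b := by
  have hne : Ψ a ≠ 0 := by simpa [isoscelesDist] using (h.1 0 1).not.2 (by decide)
  have hnonneg : 0 ≤ Ψ a := by simpa [isoscelesDist] using h.nonneg 0 1
  have htri : Ψ a ≤ Ψ b + Ψ b := by simpa [isoscelesDist] using h.2.2 0 1 2
  exact ⟨hnonneg.lt_of_ne' hne, by linarith⟩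

theorem stmt3 (Ψ : ℝ → ℝ) :
    (Ψ 0 = 0 ∧ ∀ a b : ℝ, 0 < a → a < b → 0 < Ψ a ∧ Ψ a ≤ 2 * Ψ b) ↔
      (∀ (X : Type) (d : X → X → ℝ), IsUltrametric d →
        IsMetric (fun x y => Ψ (d x y))) := by
  refine ⟨fun ⟨hΨ0, hΨ⟩ X d hd => hd.isMetric_comp hΨ0 hΨ, fun H => ?_⟩
  have hmetric {a b : ℝ} (ha : 0 < a) (hab : a ≤ b) :=
    H _ _ (isUltrametric_isoscelesDist ha hab)
  refine ⟨?_, fun a b ha hab => (hmetric ha hab.le).apply_pos_and_le_two_mul_of_isoscelesDist⟩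
  simpa [isoscelesDist] using ((hmetric one_pos le_rfl).1 0 0).2 rfl
end

section
/- Let f : \mathbb{R}^+ \to \mathbb{R}^+ be amenable. Then f is metric preserving if and only if (f(a), f(b), f(c)) is a triangle triplet whenever (a,b,c) is a triangle triplet. -/
def triangleMetric (a b c : ℝ) : Fin 3 → Fin 3 → ℝ
  | 0, 1 | 1, 0 => a
  | 0, 2 | 2, 0 => b
  | 1, 2 | 2, 1 => c
  | _, _ => 0

lemma IsMetric.triangleTriplet {X : Type*} {d : X → X → ℝ} (hd : IsMetric d) (x y z : X) :
    TriangleTriplet (d x y) (d x z) (d z y) :=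
  ⟨hd.2.2 x y z, by linarith [hd.2.2 x z y, hd.2.1 y z],
    by linarith [hd.2.2 z y x, hd.2.1 z x, hd.2.1 x y]⟩

lemma isMetric_triangleMetric {a b c : ℝ} (ha : 0 < a) (hb : 0 < b) (hc : 0 < c)
    (h : TriangleTriplet a b c) : IsMetric (triangleMetric a b c) := by
  obtain ⟨h₁, h₂, h₃⟩ := h
  refine ⟨fun x y => ?_, fun x y => ?_, fun x y z => ?_⟩ <;>
    fin_cases x <;> fin_cases y <;> try fin_cases z
  all_goals simp [triangleMetric] <;> linarith

lemma Amenable.nonneg {f : ℝ → ℝ} (hf : Amenable f) {x : ℝ} (hx : 0 ≤ x) : 0 ≤ f x := by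
  rcases hx.eq_or_lt with rfl | hx
  · exact hf.1.ge
  · exact (hf.2 x hx).le

lemma Amenable.eq_zero_iff {f : ℝ → ℝ} (hf : Amenable f) {x : ℝ} (hx : 0 ≤ x) :
    f x = 0 ↔ x = 0 := by
  refine ⟨fun hfx => ?_, fun hx0 => hx0 ▸ hf.1⟩
  by_contra hne
  exact (hf.2 x (lt_of_le_of_ne hx (Ne.symm hne))).ne' hfx

lemma Amenable.map_triangleTriplet_of_degenerate {f : ℝ → ℝ} (hf : Amenable f) {a b c : ℝ}
    (ha : 0 ≤ a) (hb : 0 ≤ b) (hc : 0 ≤ c) (h : TriangleTriplet a b c)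
    (h0 : a = 0 ∨ b = 0 ∨ c = 0) :
    TriangleTriplet (f a) (f b) (f c) := by
  obtain ⟨h₁, h₂, h₃⟩ := h
  have := hf.nonneg ha; have := hf.nonneg hb; have := hf.nonneg hc
  rcases h0 with rfl | rfl | rfl
  · obtain rfl : b = c := by linarith
    exact ⟨by linarith [hf.1], by linarith, by linarith⟩
  · obtain rfl : a = c := by linarith
    exact ⟨by linarith, by linarith [hf.1], by linarith⟩
  · obtain rfl : a = b := by linarith
    exact ⟨by linarith, by linarith, by linarith [hf.1]⟩

theorem stmt6 (f : ℝ → ℝ) (hf : Amenable f) :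
    MetricPreserving f ↔
      (∀ a b c : ℝ, 0 ≤ a → 0 ≤ b → 0 ≤ c → TriangleTriplet a b c →
        TriangleTriplet (f a) (f b) (f c)) := by
  constructor
  · intro hmp a b c ha hb hc h
    by_cases hpos : 0 < a ∧ 0 < b ∧ 0 < c
    · obtain ⟨ha, hb, hc⟩ := hpos
      exact (hmp _ _ (isMetric_triangleMetric ha hb hc h)).triangleTriplet 0 1 2
    · refine hf.map_triangleTriplet_of_degenerate ha hb hc h ?_
      contrapose! hpos
      exact ⟨ha.lt_of_ne' hpos.1, hb.lt_of_ne' hpos.2.1, hc.lt_of_ne' hpos.2.2⟩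
  · intro hpres X d hd
    refine ⟨fun x y => ?_, fun x y => congrArg f (hd.2.1 x y), fun x y z => ?_⟩
    · rw [hf.eq_zero_iff (hd.nonneg x y)]
      exact hd.1 x y
    · exact (hpres _ _ _ (hd.nonneg x y) (hd.nonneg x z) (hd.nonneg z y)
        (hd.triangleTriplet x y z)).1
end

section
/- Let p be a prime. A function f : \mathbb{R}^+ \to \mathbb{R}^+ is p-adic ultrametric preserving (i.e., f \circ d_p is an ultrametric on \mathbb{Q}_p) if and only if f(0) = 0 and 0 < f(p^n) \le f(p^{n+1}) holds for every n \in \mathbb{Z}. -/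
/-! Every nonzero `p`-adic distance is an integer power of `p`, and every such power occurs as the
distance from `0`. If `f ∘ dist` is an ultrametric, the isosceles property of `ℚ_[p]` applied to
`0, p⁻ⁿ, p⁻ⁿ⁻¹` forces `f (pⁿ) ≤ f (pⁿ⁺¹)`. Conversely, these inequalities make `f` monotone on the
set of distances, and a monotone `f` vanishing exactly at `0` carries the strong triangle inequality
of `dist` over to `f ∘ dist`. -/

open Set Function

namespace IsMetric

variable {X : Type*} {d : X → X → ℝ}

lemma nonneg_s12 (hd : IsMetric d) (x y : X) : 0 ≤ d x y := by
  have h := hd.2.2 x x y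
  rw [(hd.1 x x).2 rfl, hd.2.1 y x] at h
  linarith

lemma pos_of_ne (hd : IsMetric d) {x y : X} (hxy : x ≠ y) : 0 < d x y :=
  (hd.nonneg_s12 x y).lt_of_ne' (mt (hd.1 x y).1 hxy)

end IsMetric

lemma isUltrametric_of_le_max {X : Type*} {d : X → X → ℝ} (hzero : ∀ x y, d x y = 0 ↔ x = y)
    (hsymm : ∀ x y, d x y = d y x) (hmax : ∀ x y z, d x y ≤ max (d x z) (d z y)) :
    IsUltrametric d := by
  have hnonneg : ∀ x y, 0 ≤ d x y := fun x y => by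
    simpa [(hzero x x).2 rfl, hsymm y x] using hmax x x y
  exact ⟨⟨hzero, hsymm, fun x y z =>
    (hmax x y z).trans (max_le_add_of_nonneg (hnonneg x z) (hnonneg z y))⟩, hmax⟩

section UltrametricDist

variable {X : Type*} [PseudoMetricSpace X] [IsUltrametricDist X] {f : ℝ → ℝ}

theorem isUltrametric_comp_dist (hf0 : f 0 = 0) (hpos : ∀ x y : X, x ≠ y → 0 < f (dist x y))
    (hmono : MonotoneOn f (range (uncurry (dist : X → X → ℝ)))) :
    IsUltrametric (fun x y : X => f (dist x y)) := by
  have hdist (a b : X) : dist a b ∈ range (uncurry (dist : X → X → ℝ)) := ⟨(a, b), rfl⟩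
  refine isUltrametric_of_le_max (fun x y => ⟨fun h => ?_, fun h => by rw [h, dist_self, hf0]⟩)
    (fun x y => by rw [dist_comm]) fun x y z => ?_
  · by_contra hxy
    exact (hpos x y hxy).ne' h
  · rcases le_max_iff.1 (dist_triangle_max x z y) with h | h
    · exact le_max_of_le_left (hmono (hdist x y) (hdist x z) h)
    · exact le_max_of_le_right (hmono (hdist x y) (hdist z y) h)

theorem IsUltrametric.apply_dist_le_of_dist_lt (hf : IsUltrametric (fun x y : X => f (dist x y)))
    {x y z : X} (h : dist x y < dist x z) : f (dist x y) ≤ f (dist x z) := by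
  have hiso : dist z y = dist z x := by
    rw [IsUltrametricDist.dist_eq_max_of_dist_ne_dist z x y (by rw [dist_comm]; exact h.ne'),
      max_eq_left (by rw [dist_comm z x]; exact h.le)]
  simpa [hiso, dist_comm z x] using hf.2 x y z

end UltrametricDist

lemma monotoneOn_insert_zero_range_zpow {b : ℝ} (hb : 1 < b) {f : ℝ → ℝ} (hf0 : f 0 = 0)
    (hnonneg : ∀ n : ℤ, 0 ≤ f (b ^ n)) (hstep : ∀ n : ℤ, f (b ^ n) ≤ f (b ^ (n + 1))) :
    MonotoneOn f (insert 0 (range (b ^ · : ℤ → ℝ))) := by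
  rintro _ (rfl | ⟨m, rfl⟩) _ (rfl | ⟨n, rfl⟩) hmn
  · exact le_rfl
  · simpa only [hf0] using hnonneg n
  · exact absurd hmn (zpow_pos (zero_lt_one.trans hb) m).not_ge
  · exact monotone_int_of_le_succ hstep ((zpow_le_zpow_iff_right₀ hb).1 hmn)

namespace Padic

variable {p : ℕ} [Fact p.Prime]

lemma dist_zero_zpow_neg (n : ℤ) : dist (0 : ℚ_[p]) ((p : ℚ_[p]) ^ (-n)) = (p : ℝ) ^ n := by
  rw [dist_comm, dist_zero_right, norm_p_zpow, neg_neg]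

lemma exists_dist_eq_zpow {x y : ℚ_[p]} (hxy : x ≠ y) : ∃ n : ℤ, dist x y = (p : ℝ) ^ n :=
  ⟨_, by rw [dist_eq_norm, norm_eq_zpow_neg_valuation (sub_ne_zero.2 hxy)]⟩

lemma range_dist_subset :
    range (uncurry (dist : ℚ_[p] → ℚ_[p] → ℝ)) ⊆ insert 0 (range ((p : ℝ) ^ · : ℤ → ℝ)) := by
  rintro _ ⟨⟨x, y⟩, rfl⟩
  rcases eq_or_ne x y with rfl | hxy
  · exact Or.inl (dist_self x)
  · exact Or.inr ((exists_dist_eq_zpow hxy).imp fun _ h => h.symm)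

end Padic

theorem stmt12 (p : ℕ) [Fact p.Prime] (f : ℝ → ℝ) :
    IsUltrametric (fun x y : ℚ_[p] => f (dist x y)) ↔
      (f 0 = 0 ∧ ∀ n : ℤ,
        0 < f ((p : ℝ) ^ n) ∧ f ((p : ℝ) ^ n) ≤ f ((p : ℝ) ^ (n + 1))) := by
  have hp : (1 : ℝ) < p := mod_cast (Fact.out : p.Prime).one_lt
  constructor
  · intro hf
    have hf0 : f 0 = 0 := by simpa using (hf.1.1 0 0).2 rfl
    refine ⟨hf0, fun n => ⟨?_, ?_⟩⟩
    · rw [← Padic.dist_zero_zpow_neg]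
      exact hf.1.pos_of_ne (zpow_ne_zero _ (by simpa using (Fact.out : p.Prime).ne_zero)).symm
    · rw [← Padic.dist_zero_zpow_neg, ← Padic.dist_zero_zpow_neg]
      refine hf.apply_dist_le_of_dist_lt ?_
      rw [Padic.dist_zero_zpow_neg, Padic.dist_zero_zpow_neg]
      exact zpow_lt_zpow_right₀ hp (lt_add_one n)
  · rintro ⟨hf0, hf⟩
    refine isUltrametric_comp_dist hf0 (fun x y hxy => ?_)
      ((monotoneOn_insert_zero_range_zpow hp hf0 (fun n => (hf n).1.le) fun n => (hf n).2).mono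
        Padic.range_dist_subset)
    obtain ⟨n, hn⟩ := Padic.exists_dist_eq_zpow hxy
    exact hn ▸ (hf n).1
end

section
/- Let X = \{x_1,x_2,x_3,x_4\} with the ultrametric d equal to 1 on \{x_1,x_3\}, 2 on \{x_2,x_4\}, 3 on all other distinct pairs, and 0 on the diagonal. Define f : \mathbb{R}^+ \to \mathbb{R}^+ by f(t) = 2t for 0 \le t \le 1, f(t) = 3 - t for 1 \le t \le 2, f(t) = -1 + (4/3)t for 2 \le t \le 3, and f(t) = 3 for t \ge 3. Then f \circ d is an ultrametric on X, but f(2) < f(1), so f does not agree on \{1,2,3\} with any increasing amenable function g : \mathbb{R}^+ \to \mathbb{R}^+. -/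
def exampleDist : Fin 4 → Fin 4 → ℝ := fun x y =>
  if x = y then 0
  else if (x = 0 ∧ y = 2) ∨ (x = 2 ∧ y = 0) then 1
  else if (x = 1 ∧ y = 3) ∨ (x = 3 ∧ y = 1) then 2
  else 3

noncomputable def exampleF : ℝ → ℝ := fun t =>
  if t ≤ 1 then 2 * t
  else if t ≤ 2 then 3 - t
  else if t ≤ 3 then -1 + (4 / 3) * t
  else 3

/-!
Up to relabelling the points, `exampleF ∘ exampleDist` is `exampleDist` again: `exampleF` fixes
`0` and `3` and swaps the values `1` and `2`, which is matched by the relabelling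
`x₁ ↔ x₂, x₃ ↔ x₄` of the points. Hence it is an ultrametric, although `exampleF` decreases
from `1` to `2`, which no increasing function can do.
-/

open Function

theorem IsUltrametric.of_le_max {X : Type*} {d : X → X → ℝ} (hzero : ∀ x y, d x y = 0 ↔ x = y)
    (hsymm : ∀ x y, d x y = d y x) (hnonneg : ∀ x y, 0 ≤ d x y)
    (hmax : ∀ x y z, d x y ≤ max (d x z) (d z y)) : IsUltrametric d :=
  ⟨⟨hzero, hsymm, fun x y z => (hmax x y z).trans
    (max_le_add_of_nonneg (hnonneg x z) (hnonneg z y))⟩, hmax⟩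

theorem IsUltrametric.comp_injective {X Y : Type*} {d : Y → Y → ℝ} (hd : IsUltrametric d)
    {σ : X → Y} (hσ : Injective σ) : IsUltrametric (fun x y => d (σ x) (σ y)) :=
  ⟨⟨fun x y => (hd.1.1 (σ x) (σ y)).trans hσ.eq_iff, fun x y => hd.1.2.1 (σ x) (σ y),
    fun x y z => hd.1.2.2 (σ x) (σ y) (σ z)⟩, fun x y z => hd.2 (σ x) (σ y) (σ z)⟩

theorem isUltrametric_exampleDist : IsUltrametric exampleDist := by
  apply IsUltrametric.of_le_max
  · intro x y
    fin_cases x <;> fin_cases y <;> norm_num +decide [exampleDist]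
  · intro x y
    fin_cases x <;> fin_cases y <;> norm_num +decide [exampleDist]
  · intro x y
    fin_cases x <;> fin_cases y <;> norm_num +decide [exampleDist]
  · intro x y z
    fin_cases x <;> fin_cases y <;> fin_cases z <;> norm_num +decide [exampleDist]

theorem exampleF_one : exampleF 1 = 2 := by norm_num [exampleF]

theorem exampleF_two : exampleF 2 = 1 := by norm_num [exampleF]

theorem exampleF_comp_exampleDist (x y : Fin 4) :
    exampleF (exampleDist x y) = exampleDist (![1, 0, 3, 2] x) (![1, 0, 3, 2] y) := by
  fin_cases x <;> fin_cases y <;> norm_num +decide [exampleDist, exampleF]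

theorem stmt16 :
    IsUltrametric (fun x y => exampleF (exampleDist x y)) ∧
    exampleF 2 < exampleF 1 ∧
    ∀ g : ℝ → ℝ, Amenable g → (∀ a b : ℝ, 0 ≤ a → a ≤ b → g a ≤ g b) →
      ¬ (g 1 = exampleF 1 ∧ g 2 = exampleF 2 ∧ g 3 = exampleF 3) := by
  refine ⟨?_, by norm_num [exampleF_one, exampleF_two], ?_⟩
  · have hσ : Injective ![(1 : Fin 4), 0, 3, 2] := by decide
    simpa only [exampleF_comp_exampleDist] using isUltrametric_exampleDist.comp_injective hσ
  · rintro g - hmono ⟨hg1, hg2, -⟩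
    have := hmono 1 2 zero_le_one one_le_two
    rw [hg1, hg2, exampleF_one, exampleF_two] at this
    norm_num at this
end
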